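/- arXiv:0903.4256 — 4 statements merged into one kernel-verified Lean document; each statement's English description precedes it below -/
import Mathlib

section
/- Consider four equiprobable qubit input states with Bloch vectors r_{ε,δ} = (d₀, δ·d_wp, ε·d_ww) for ε, δ ∈ {+1, −1}, where d₀² + d_ww² + d_wp² ≤ 1, and a POVM with Bloch parametrization {(μ_j, R_j)}, R_j = (x_j, y_j, z_j), ‖R_j‖ = 1, ∑ μ_j = 2, ∑ μ_j R_j = 0. Define P_WW = ∑_j max over ε of the joint probability that the WW bit equals ε and outcome j occurs; then P_WW = (1/2)(1 + d_ww ∑_j (μ_j/2)|z_j|). -/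
open Finset

/-- For the four-state game, the optimal which-way guessing probability
P_WW = sum_j max_eps p_{eps,j}, with marginal joint probabilities
p_{eps,j} = (mu_j/4)(1 + d0 x_j + eps d_ww z_j), equals (1/2)(1 + d_ww sum_j (mu_j/2)|z_j|). -/
theorem stmt7 {ι : Type*} [Fintype ι] (μ x y z : ι → ℝ) (d₀ dww dwp : ℝ)
    (hμ : ∀ j, 0 ≤ μ j) (hunit : ∀ j, Real.sqrt (x j ^ 2 + y j ^ 2 + z j ^ 2) = 1)
    (hsum : ∑ j, μ j = 2)
    (hx : ∑ j, μ j * x j = 0) (hy : ∑ j, μ j * y j = 0) (hz : ∑ j, μ j * z j = 0)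
    (hdww : 0 ≤ dww) (hdwp : 0 ≤ dwp) (hball : d₀ ^ 2 + dww ^ 2 + dwp ^ 2 ≤ 1) :
    ∑ j, max ((μ j / 4) * (1 + d₀ * x j + dww * z j))
             ((μ j / 4) * (1 + d₀ * x j - dww * z j))
      = (1 / 2) * (1 + dww * ∑ j, (μ j / 2) * |z j|) := by
  have key : ∀ j, max ((μ j / 4) * (1 + d₀ * x j + dww * z j))
             ((μ j / 4) * (1 + d₀ * x j - dww * z j))
      = (μ j / 4) * (1 + d₀ * x j) + dww * ((μ j / 4) * |z j|) := by
    intro j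
    have hc : (0:ℝ) ≤ μ j / 4 := by linarith [hμ j]
    rw [← mul_max_of_nonneg _ _ hc]
    have : max (1 + d₀ * x j + dww * z j) (1 + d₀ * x j - dww * z j)
        = (1 + d₀ * x j) + |dww * z j| := by
      rw [abs_eq_max_neg, sub_eq_add_neg, max_add_add_left]
    rw [this, abs_mul, abs_of_nonneg hdww]
    ring
  simp only [key]
  rw [Finset.sum_add_distrib, ← Finset.mul_sum]
  have h1 : ∑ j, (μ j / 4) * (1 + d₀ * x j) = 1 / 2 := by
    have : ∑ j, (μ j / 4) * (1 + d₀ * x j)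
        = (∑ j, μ j) / 4 + d₀ / 4 * ∑ j, μ j * x j := by
      rw [Finset.sum_div, Finset.mul_sum, ← Finset.sum_add_distrib]
      exact Finset.sum_congr rfl fun j _ => by ring
    rw [this, hsum, hx]; ring
  rw [h1, Finset.mul_sum]
  rw [Finset.mul_sum]
  have h2 : ∀ j ∈ Finset.univ (α := ι), dww * ((μ j / 4) * |z j|) = 1/2 * (dww * ((μ j / 2) * |z j|)) := by
    intro j _; ring
  rw [Finset.sum_congr rfl h2, ← Finset.mul_sum, ← Finset.mul_sum]
  ring
end

section
/- Under the setup of the four-state discrimination game, the optimal guessing probabilities satisfy the complementarity relation ((2P_WW − 1)/d_ww)² + ((2P_WP − 1)/d_wp)² ≤ 1 for any POVM. -/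
/-!
Both rescaled quantities are averages with weights `μ j / 2`, which form a probability vector:
`(2 P_WW - 1) / d_ww = ∑ (μ j / 2) |z j|` and `(2 P_WP - 1) / d_wp = ∑ (μ j / 2) |y j|`.
The points `(|z j|, |y j|)` lie in the closed unit disc because the `R j` are unit vectors, so
their convex combination does as well.
-/

open Finset

theorem sq_add_sq_le_one_of_convex_combination {ι : Type*} (s : Finset ι) (w a b : ι → ℝ)
    (hw₀ : ∀ j ∈ s, 0 ≤ w j) (hw₁ : ∑ j ∈ s, w j = 1)
    (hab : ∀ j ∈ s, a j ^ 2 + b j ^ 2 ≤ 1) :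
    (∑ j ∈ s, w j * a j) ^ 2 + (∑ j ∈ s, w j * b j) ^ 2 ≤ 1 := by
  have norm_sq (u v : ℝ) : ‖!₂[u, v]‖ ^ 2 = u ^ 2 + v ^ 2 := by
    simp [EuclideanSpace.norm_sq_eq, Fin.sum_univ_two]
  have hmem : ∑ j ∈ s, w j • !₂[a j, b j] ∈ Metric.closedBall (0 : EuclideanSpace ℝ (Fin 2)) 1 :=
    (convex_closedBall 0 1).sum_mem hw₀ hw₁ fun j hj => by
      rw [mem_closedBall_zero_iff, ← sq_le_one_iff₀ (norm_nonneg _), norm_sq]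
      exact hab j hj
  have hsum : ∑ j ∈ s, w j • !₂[a j, b j] = !₂[∑ j ∈ s, w j * a j, ∑ j ∈ s, w j * b j] := by
    ext i; fin_cases i <;> simp [WithLp.ofLp_sum]
  rw [hsum, mem_closedBall_zero_iff, ← sq_le_one_iff₀ (norm_nonneg _), norm_sq] at hmem
  exact hmem

theorem stmt8_general {ι : Type*} [Fintype ι] (μ x y z : ι → ℝ) (dww dwp PWW PWP : ℝ)
    (hμ : ∀ j, 0 ≤ μ j) (hunit : ∀ j, Real.sqrt (x j ^ 2 + y j ^ 2 + z j ^ 2) = 1)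
    (hsum : ∑ j, μ j = 2)
    (hdww : 0 < dww) (hdwp : 0 < dwp)
    (hPWW : PWW = (1 / 2) * (1 + dww * ∑ j, (μ j / 2) * |z j|))
    (hPWP : PWP = (1 / 2) * (1 + dwp * ∑ j, (μ j / 2) * |y j|)) :
    ((2 * PWW - 1) / dww) ^ 2 + ((2 * PWP - 1) / dwp) ^ 2 ≤ 1 := by
  have hWW : (2 * PWW - 1) / dww = ∑ j, (μ j / 2) * |z j| := by
    rw [hPWW]; field_simp; ring
  have hWP : (2 * PWP - 1) / dwp = ∑ j, (μ j / 2) * |y j| := by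
    rw [hPWP]; field_simp; ring
  have hweights : ∑ j, μ j / 2 = 1 := by
    rw [← Finset.sum_div, hsum]; norm_num
  have hdisc (j : ι) : |z j| ^ 2 + |y j| ^ 2 ≤ 1 := by
    have := Real.sqrt_eq_one.mp (hunit j)
    rw [sq_abs, sq_abs]
    nlinarith [sq_nonneg (x j)]
  rw [hWW, hWP]
  exact sq_add_sq_le_one_of_convex_combination univ _ _ _
    (fun j _ => by linarith [hμ j]) hweights (fun j _ => hdisc j)

/-- Complementarity relation for the four-state discrimination game:
((2P_WW - 1)/d_ww)^2 + ((2P_WP - 1)/d_wp)^2 <= 1 for any POVM. -/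
theorem stmt8 {ι : Type*} [Fintype ι] (μ x y z : ι → ℝ) (d₀ dww dwp PWW PWP : ℝ)
    (hμ : ∀ j, 0 ≤ μ j) (hunit : ∀ j, Real.sqrt (x j ^ 2 + y j ^ 2 + z j ^ 2) = 1)
    (hsum : ∑ j, μ j = 2)
    (hx : ∑ j, μ j * x j = 0) (hy : ∑ j, μ j * y j = 0) (hz : ∑ j, μ j * z j = 0)
    (hdww : 0 < dww) (hdwp : 0 < dwp) (hball : d₀ ^ 2 + dww ^ 2 + dwp ^ 2 ≤ 1)
    (hPWW : PWW = (1 / 2) * (1 + dww * ∑ j, (μ j / 2) * |z j|))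
    (hPWP : PWP = (1 / 2) * (1 + dwp * ∑ j, (μ j / 2) * |y j|)) :
    ((2 * PWW - 1) / dww) ^ 2 + ((2 * PWP - 1) / dwp) ^ 2 ≤ 1 :=
  stmt8_general μ x y z dww dwp PWW PWP hμ hunit hsum hdww hdwp hPWW hPWP
end

section
/- For the eight-state (mixed-state) discrimination game with Bloch vectors (d₀ ± d_wm, ±d_wp, ±d_ww), any POVM satisfies ((2P_WW − 1)/d_ww)² + ((2P_WP − 1)/d_wp)² + ((2P_WM − 1)/d_wm)² ≤ 1. -/
/-!
Writing `w j = μ j / 2`, the POVM weights form a probability vector and each normalised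
guessing advantage `(2 P - 1) / d` is the `w`-average of one coordinate of the folded vectors
`(|x j|, |y j|, |z j|)`. These lie on the unit sphere, so their average lies in the closed unit
ball, which is the claimed inequality.
-/

open Finset

theorem sq_add_sq_add_sq_of_convex_comb_le_one {ι : Type*} (s : Finset ι) (w a b c : ι → ℝ)
    (hw₀ : ∀ j ∈ s, 0 ≤ w j) (hw₁ : ∑ j ∈ s, w j = 1)
    (habc : ∀ j ∈ s, a j ^ 2 + b j ^ 2 + c j ^ 2 ≤ 1) :
    (∑ j ∈ s, w j * a j) ^ 2 + (∑ j ∈ s, w j * b j) ^ 2 + (∑ j ∈ s, w j * c j) ^ 2 ≤ 1 := by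
  have hnorm (p : EuclideanSpace ℝ (Fin 3)) : ‖p‖ ^ 2 = p 0 ^ 2 + p 1 ^ 2 + p 2 ^ 2 := by
    simp [EuclideanSpace.norm_sq_eq, Fin.sum_univ_three]
  have hmem := (convex_closedBall (0 : EuclideanSpace ℝ (Fin 3)) 1).sum_mem hw₀ hw₁
    (z := fun j => !₂[a j, b j, c j]) fun j hj => by
      rw [mem_closedBall_zero_iff, ← sq_le_one_iff₀ (norm_nonneg _), hnorm]
      simpa using habc j hj
  rw [mem_closedBall_zero_iff, ← sq_le_one_iff₀ (norm_nonneg _), hnorm] at hmem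
  simpa [Finset.sum_apply] using hmem

theorem two_mul_half_one_add_mul_sub_one_div {d S : ℝ} (hd : d ≠ 0) :
    (2 * ((1 / 2) * (1 + d * S)) - 1) / d = S := by
  field_simp; ring

theorem stmt10_general {ι : Type*} [Fintype ι] (μ x y z : ι → ℝ)
    (dww dwp dwm PWW PWP PWM : ℝ)
    (hμ : ∀ j, 0 ≤ μ j) (hunit : ∀ j, Real.sqrt (x j ^ 2 + y j ^ 2 + z j ^ 2) = 1)
    (hsum : ∑ j, μ j = 2)
    (hdww : 0 < dww) (hdwp : 0 < dwp) (hdwm : 0 < dwm)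
    (hPWW : PWW = (1 / 2) * (1 + dww * ∑ j, (μ j / 2) * |z j|))
    (hPWP : PWP = (1 / 2) * (1 + dwp * ∑ j, (μ j / 2) * |y j|))
    (hPWM : PWM = (1 / 2) * (1 + dwm * ∑ j, (μ j / 2) * |x j|)) :
    ((2 * PWW - 1) / dww) ^ 2 + ((2 * PWP - 1) / dwp) ^ 2
      + ((2 * PWM - 1) / dwm) ^ 2 ≤ 1 := by
  rw [hPWW, hPWP, hPWM, two_mul_half_one_add_mul_sub_one_div hdww.ne',
    two_mul_half_one_add_mul_sub_one_div hdwp.ne', two_mul_half_one_add_mul_sub_one_div hdwm.ne']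
  refine sq_add_sq_add_sq_of_convex_comb_le_one _ _ _ _ _ (fun j _ => by linarith [hμ j])
    (by rw [← sum_div, hsum]; norm_num) fun j _ => ?_
  have hsq : x j ^ 2 + y j ^ 2 + z j ^ 2 = 1 := (Real.sqrt_eq_one).1 (hunit j)
  simp only [sq_abs]
  linarith

/-- For the eight-state (mixed-state) discrimination game, any POVM satisfies
((2P_WW-1)/d_ww)^2 + ((2P_WP-1)/d_wp)^2 + ((2P_WM-1)/d_wm)^2 <= 1. -/
theorem stmt10 {ι : Type*} [Fintype ι] (μ x y z : ι → ℝ)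
    (dww dwp dwm d₀ PWW PWP PWM : ℝ)
    (hμ : ∀ j, 0 ≤ μ j) (hunit : ∀ j, Real.sqrt (x j ^ 2 + y j ^ 2 + z j ^ 2) = 1)
    (hsum : ∑ j, μ j = 2)
    (hx : ∑ j, μ j * x j = 0) (hy : ∑ j, μ j * y j = 0) (hz : ∑ j, μ j * z j = 0)
    (hdww : 0 < dww) (hdwp : 0 < dwp) (hdwm : 0 < dwm)
    (hball : dww ^ 2 + dwp ^ 2 + dwm ^ 2 ≤ 1)
    (hd₀ : d₀ = Real.sqrt (1 - dww ^ 2 - dwp ^ 2) - dwm)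
    (hPWW : PWW = (1 / 2) * (1 + dww * ∑ j, (μ j / 2) * |z j|))
    (hPWP : PWP = (1 / 2) * (1 + dwp * ∑ j, (μ j / 2) * |y j|))
    (hPWM : PWM = (1 / 2) * (1 + dwm * ∑ j, (μ j / 2) * |x j|)) :
    ((2 * PWW - 1) / dww) ^ 2 + ((2 * PWP - 1) / dwp) ^ 2
      + ((2 * PWM - 1) / dwm) ^ 2 ≤ 1 :=
  stmt10_general μ x y z dww dwp dwm PWW PWP PWM hμ hunit hsum hdww hdwp hdwm hPWW hPWP hPWM
end

section
/- Let X be a uniformly distributed bit and Y a finite random variable on the same probability space, and suppose the indicator W = 1 if the realized pair (x,y) satisfies P(X = x, Y = y) > P(X = −x, Y = y) (and W = 0 otherwise) is independent of Y, with no ties. Then the mutual information satisfies I(X : Y) = 1 − H₂(P(W = 1)), where H₂ is the binary entropy. -/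
open Finset
open scoped Classical

/-- The probability mass function of the random variable `X` under the weight `p`. -/
noncomputable def pmfOf {Ω α : Type*} [Fintype Ω] (p : Ω → ℝ) (X : Ω → α) (a : α) : ℝ :=
  ∑ ω, if X ω = a then p ω else 0

/-- The Shannon entropy (in bits) of the random variable `X` under the weight `p`,
with the convention `0 * log 0 = 0`; the sum is over the (finite) range of `X`. -/
noncomputable def ent {Ω α : Type*} [Fintype Ω] (p : Ω → ℝ) (X : Ω → α) : ℝ :=
  -∑ a ∈ Finset.univ.image X, pmfOf p X a * Real.logb 2 (pmfOf p X a)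

/-- Mutual information `I(X : Y) = H(X) + H(Y) - H(X, Y)` (in bits). -/
noncomputable def mutualInfo {Ω α β : Type*} [Fintype Ω]
    (p : Ω → ℝ) (X : Ω → α) (Y : Ω → β) : ℝ :=
  ent p X + ent p Y - ent p (fun ω => (X ω, Y ω))

/-- The binary entropy function (in bits). -/
noncomputable def H2 (q : ℝ) : ℝ := -(q * Real.logb 2 q + (1 - q) * Real.logb 2 (1 - q))

lemma pmf_nonneg {Ω α : Type*} [Fintype Ω] {p : Ω → ℝ} (hp : ∀ ω, 0 ≤ p ω)
    (X : Ω → α) (a : α) : 0 ≤ pmfOf p X a := by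
  apply Finset.sum_nonneg; intro ω _; split <;> simp [hp ω]

lemma pmf_not_mem {Ω α : Type*} [Fintype Ω] {p : Ω → ℝ} {X : Ω → α} {a : α}
    (h : a ∉ Finset.univ.image X) : pmfOf p X a = 0 := by
  apply Finset.sum_eq_zero; intro ω _
  rw [if_neg]; intro he
  exact h (Finset.mem_image.mpr ⟨ω, Finset.mem_univ ω, he⟩)

lemma ent_eq_sum_subset {Ω α : Type*} [Fintype Ω] (p : Ω → ℝ) (X : Ω → α)
    (T : Finset α) (hT : ∀ ω, X ω ∈ T) :
    ent p X = -∑ a ∈ T, pmfOf p X a * Real.logb 2 (pmfOf p X a) := by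
  have hT' : Finset.univ.image X ⊆ T := by
    intro a ha
    obtain ⟨ω, _, he⟩ := Finset.mem_image.mp ha
    exact he ▸ hT ω
  unfold ent; congr 1
  apply Finset.sum_subset hT'
  intro a _ ha
  rw [pmf_not_mem ha]; simp

lemma mul_logb_mul (a b : ℝ) (ha : 0 ≤ a) (hb : 0 < b) :
    (a * b) * Real.logb 2 (a * b) = a * b * Real.logb 2 a + a * b * Real.logb 2 b := by
  rcases ha.eq_or_lt with h | h
  · simp [← h]
  · rw [Real.logb_mul h.ne' hb.ne']; ring

lemma logb_half : Real.logb 2 (1/2) = -1 := by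
  rw [one_div, Real.logb_inv, Real.logb_self_eq_one (by norm_num)]

lemma sum_pair' {M : Type*} [AddCommMonoid M] {a b : ℤ} (h : a ≠ b) (f : ℤ → M) :
    ∑ x ∈ ({a, b} : Finset ℤ), f x = f a + f b := by
  classical
  rw [Finset.sum_insert (by simp [h]), Finset.sum_singleton]

/-- If X is a uniform bit, Y a finite random variable, and the correctness
indicator W (W = 1 iff P(X = x, Y = y) > P(X = -x, Y = y) for the realized pair) is
independent of Y and there are no ties, then I(X : Y) = 1 - H₂(P(W = 1)). -/
theorem stmt12 {Ω β : Type*} [Fintype Ω] [Fintype β]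
    (p : Ω → ℝ) (hp : ∀ ω, 0 ≤ p ω) (hp1 : ∑ ω, p ω = 1)
    (X : Ω → ℤ) (Y : Ω → β)
    (hX : ∀ ω, X ω = 1 ∨ X ω = -1) (hunif : pmfOf p X 1 = 1 / 2)
    (W : Ω → Fin 2)
    (hW : W = fun ω =>
      if pmfOf p (fun ω' => (X ω', Y ω')) (-(X ω), Y ω)
          < pmfOf p (fun ω' => (X ω', Y ω')) (X ω, Y ω) then 1 else 0)
    (hties : ∀ y : β, pmfOf p (fun ω' => (X ω', Y ω')) (1, y)
      ≠ pmfOf p (fun ω' => (X ω', Y ω')) (-1, y))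
    (hindep : ∀ (b : Fin 2) (y : β),
      pmfOf p (fun ω => (W ω, Y ω)) (b, y) = pmfOf p W b * pmfOf p Y y) :
    mutualInfo p X Y = 1 - H2 (pmfOf p W 1) := by
  have hWval : ∀ ω, W ω = if pmfOf p (fun ω' => (X ω', Y ω')) (-(X ω), Y ω)
      < pmfOf p (fun ω' => (X ω', Y ω')) (X ω, Y ω) then 1 else 0 := fun ω => by rw [hW]
  have hqnn : ∀ x y, 0 ≤ pmfOf p (fun ω' => (X ω', Y ω')) (x, y) :=
    fun x y => pmf_nonneg hp _ _
  -- P(Y=y) = P(1,y) + P(-1,y)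
  have hsum : ∀ y, pmfOf p Y y = pmfOf p (fun ω' => (X ω', Y ω')) (1, y)
      + pmfOf p (fun ω' => (X ω', Y ω')) (-1, y) := by
    intro y
    simp only [pmfOf, ← Finset.sum_add_distrib]
    apply Finset.sum_congr rfl
    intro ω _
    rcases hX ω with h | h <;> by_cases hy : Y ω = y <;>
      simp [h, hy, Prod.ext_iff]
  -- P(X = -1) = 1/2
  have hXneg : pmfOf p X (-1) = 1/2 := by
    have h2 : pmfOf p X 1 + pmfOf p X (-1) = 1 := by
      simp only [pmfOf, ← Finset.sum_add_distrib]
      rw [← hp1]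
      apply Finset.sum_congr rfl
      intro ω _
      rcases hX ω with h | h <;> simp [h]
    linarith
  -- ∑ y, P(Y=y) = 1
  have hr1 : ∑ y, pmfOf p Y y = 1 := by
    simp only [pmfOf]
    rw [Finset.sum_comm, ← hp1]
    apply Finset.sum_congr rfl
    intro ω _
    simp
  -- P(W=1, Y=y) = max
  have hmax : ∀ y, pmfOf p (fun ω => (W ω, Y ω)) (1, y)
      = max (pmfOf p (fun ω' => (X ω', Y ω')) (1, y))
          (pmfOf p (fun ω' => (X ω', Y ω')) (-1, y)) := by
    intro y
    rcases lt_or_gt_of_ne (hties y) with hlt | hgt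
    · rw [max_eq_right hlt.le]
      simp only [pmfOf]
      apply Finset.sum_congr rfl
      intro ω _
      by_cases hy : Y ω = y
      · subst hy
        rcases hX ω with h | h
        · have hWω : W ω = 0 := by
            rw [hWval ω, h, if_neg (asymm hlt)]
          simp [Prod.ext_iff, hWω, h]
        · have hWω : W ω = 1 := by
            rw [hWval ω, h, if_pos (by simpa using hlt)]
          simp [Prod.ext_iff, hWω, h]
      · simp [Prod.ext_iff, hy]
    · rw [max_eq_left hgt.le]
      simp only [pmfOf]
      apply Finset.sum_congr rfl
      intro ω _
      by_cases hy : Y ω = y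
      · subst hy
        rcases hX ω with h | h
        · have hWω : W ω = 1 := by
            rw [hWval ω, h, if_pos hgt]
          simp [Prod.ext_iff, hWω, h]
        · have hWω : W ω = 0 := by
            rw [hWval ω, h, if_neg (by simpa using asymm hgt)]
          simp [Prod.ext_iff, hWω, h]
      · simp [Prod.ext_iff, hy]
  set w : ℝ := pmfOf p W 1 with hwdef
  have hmaxw : ∀ y, max (pmfOf p (fun ω' => (X ω', Y ω')) (1, y))
      (pmfOf p (fun ω' => (X ω', Y ω')) (-1, y)) = w * pmfOf p Y y := by
    intro y
    rw [← hmax y, hindep 1 y]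
  have hminw : ∀ y, min (pmfOf p (fun ω' => (X ω', Y ω')) (1, y))
      (pmfOf p (fun ω' => (X ω', Y ω')) (-1, y)) = (1 - w) * pmfOf p Y y := by
    intro y
    have h1 := hsum y
    have h2 := hmaxw y
    have h3 := min_add_max (pmfOf p (fun ω' => (X ω', Y ω')) (1, y))
      (pmfOf p (fun ω' => (X ω', Y ω')) (-1, y))
    nlinarith [h3]
  have hrpos : ∀ y, 0 < pmfOf p Y y := by
    intro y
    rcases (pmf_nonneg hp Y y).eq_or_lt with h | h
    · exfalso
      have h1 := hqnn 1 y
      have h2 := hqnn (-1) y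
      have h3 := hsum y
      exact hties y (by linarith)
    · exact h
  have hwnn : 0 ≤ w := pmf_nonneg hp W 1
  have hw1 : 0 ≤ 1 - w := by
    have hΩ : Nonempty Ω := by
      by_contra h
      rw [not_nonempty_iff] at h
      rw [Finset.univ_eq_empty, Finset.sum_empty] at hp1
      norm_num at hp1
    obtain ⟨ω₀⟩ := hΩ
    have hmn := hminw (Y ω₀)
    have hpos := hrpos (Y ω₀)
    have h0 : 0 ≤ min (pmfOf p (fun ω' => (X ω', Y ω')) (1, Y ω₀))
        (pmfOf p (fun ω' => (X ω', Y ω')) (-1, Y ω₀)) :=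
      le_min (hqnn _ _) (hqnn _ _)
    nlinarith
  -- entropies
  have hentX : ent p X = 1 := by
    rw [ent_eq_sum_subset p X {1, -1} (by
      intro ω
      rcases hX ω with h | h <;> simp [h])]
    rw [sum_pair' (by norm_num : (1:ℤ) ≠ -1), hunif, hXneg, logb_half]
    norm_num
  have hentY : ent p Y = -∑ y, pmfOf p Y y * Real.logb 2 (pmfOf p Y y) :=
    ent_eq_sum_subset p Y Finset.univ (fun ω => Finset.mem_univ _)
  have hentXY : ent p (fun ω => (X ω, Y ω)) =
      -∑ y, (pmfOf p (fun ω' => (X ω', Y ω')) (1, y)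
          * Real.logb 2 (pmfOf p (fun ω' => (X ω', Y ω')) (1, y))
        + pmfOf p (fun ω' => (X ω', Y ω')) (-1, y)
          * Real.logb 2 (pmfOf p (fun ω' => (X ω', Y ω')) (-1, y))) := by
    rw [ent_eq_sum_subset p _ (({1, -1} : Finset ℤ) ×ˢ Finset.univ) (by
      intro ω
      rw [Finset.mem_product]
      rcases hX ω with h | h <;> simp [h])]
    congr 1
    rw [Finset.sum_product, sum_pair' (by norm_num : (1:ℤ) ≠ -1),
      ← Finset.sum_add_distrib]
  -- key per-y identity
  have hkey : ∀ y, pmfOf p (fun ω' => (X ω', Y ω')) (1, y)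
          * Real.logb 2 (pmfOf p (fun ω' => (X ω', Y ω')) (1, y))
        + pmfOf p (fun ω' => (X ω', Y ω')) (-1, y)
          * Real.logb 2 (pmfOf p (fun ω' => (X ω', Y ω')) (-1, y))
      = (w * Real.logb 2 w + (1 - w) * Real.logb 2 (1 - w)) * pmfOf p Y y
        + pmfOf p Y y * Real.logb 2 (pmfOf p Y y) := by
    intro y
    have hmx := hmaxw y
    have hmn := hminw y
    have e1 := mul_logb_mul w (pmfOf p Y y) hwnn (hrpos y)
    have e2 := mul_logb_mul (1 - w) (pmfOf p Y y) hw1 (hrpos y)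
    rcases le_total (pmfOf p (fun ω' => (X ω', Y ω')) (-1, y))
        (pmfOf p (fun ω' => (X ω', Y ω')) (1, y)) with h | h
    · rw [max_eq_left h] at hmx
      rw [min_eq_right h] at hmn
      rw [hmx, hmn, e1, e2]
      ring
    · rw [max_eq_right h] at hmx
      rw [min_eq_left h] at hmn
      rw [hmx, hmn, e1, e2]
      ring
  -- final assembly
  unfold mutualInfo H2
  rw [hentX, hentY, hentXY]
  have hfin : ∑ y, (pmfOf p (fun ω' => (X ω', Y ω')) (1, y)
          * Real.logb 2 (pmfOf p (fun ω' => (X ω', Y ω')) (1, y))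
        + pmfOf p (fun ω' => (X ω', Y ω')) (-1, y)
          * Real.logb 2 (pmfOf p (fun ω' => (X ω', Y ω')) (-1, y)))
      = (w * Real.logb 2 w + (1 - w) * Real.logb 2 (1 - w)) * (∑ y, pmfOf p Y y)
        + ∑ y, pmfOf p Y y * Real.logb 2 (pmfOf p Y y) := by
    rw [Finset.mul_sum, ← Finset.sum_add_distrib]
    exact Finset.sum_congr rfl fun y _ => hkey y
  rw [hfin, hr1]
  ring
end
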